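/- Let β̄_0 < β̄_1 < ⋯ < β̄_g (g ≥ 1) be positive integers satisfying Bresinsky's conditions. Then the Merle datum N of (β̄_0, …, β̄_g) is a special convenient integral Newton-polygon datum with g edges satisfying conditions (A1)–(A3). -/
import Mathlib


/-- A canonical Newton-polygon datum with `r` edges: a pair of `1`-indexed sequences
`(L, M)` of positive rationals with strictly increasing inclinations `L k / M k`. -/
def IsCanonicalNP (p : (ℕ → ℚ) × (ℕ → ℚ)) (r : ℕ) : Prop :=
  (∀ k, 1 ≤ k → k ≤ r → 0 < p.1 k ∧ 0 < p.2 k) ∧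
  ∀ k, 1 ≤ k → k < r → p.1 k / p.2 k < p.1 (k + 1) / p.2 (k + 1)

/-- An integral datum: all the entries are positive integers. -/
def IsIntegralNP (p : (ℕ → ℚ) × (ℕ → ℚ)) (r : ℕ) : Prop :=
  ∀ k, 1 ≤ k → k ≤ r →
    (∃ a : ℕ, 0 < a ∧ p.1 k = a) ∧ (∃ b : ℕ, 0 < b ∧ p.2 k = b)

/-- A special datum: all the inclinations are greater than `1`. -/
def IsSpecialNP (p : (ℕ → ℚ) × (ℕ → ℚ)) (r : ℕ) : Prop :=
  ∀ k, 1 ≤ k → k ≤ r → 1 < p.1 k / p.2 k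

/-- A special convenient integral Newton-polygon datum with `r` edges. -/
def IsSCI (p : (ℕ → ℚ) × (ℕ → ℚ)) (r : ℕ) : Prop :=
  IsCanonicalNP p r ∧ IsIntegralNP p r ∧ IsSpecialNP p r

/-- The height `ht(N) = M_1 + ⋯ + M_r` of a Newton-polygon datum with `r` edges. -/
def htNP (p : (ℕ → ℚ) × (ℕ → ℚ)) (r : ℕ) : ℚ := ∑ k ∈ Finset.Icc 1 r, p.2 k

/-- The abrasion `A(N)` of a datum with `r` edges:
`L̃_i = ((1 + M_1 + ⋯ + M_{r−1})/(1 + M_1 + ⋯ + M_r))·L_i`, the `M_i` are unchanged. -/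
def abrNP (p : (ℕ → ℚ) × (ℕ → ℚ)) (r : ℕ) : (ℕ → ℚ) × (ℕ → ℚ) :=
  (fun i => ((1 + ∑ k ∈ Finset.Icc 1 (r - 1), p.2 k) /
      (1 + ∑ k ∈ Finset.Icc 1 r, p.2 k)) * p.1 i,
   p.2)

/-- The iterate `A^i(N)` of the abrasion; `A^i(N)` has `r − i` edges. -/
def abrIterNP (p : (ℕ → ℚ) × (ℕ → ℚ)) (r : ℕ) : ℕ → (ℕ → ℚ) × (ℕ → ℚ)
  | 0 => p
  | i + 1 => abrNP (abrIterNP p r i) (r - i)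

/-- Condition (A1): `1 + ht(N) < L_1/M_1`. -/
def CondA1 (p : (ℕ → ℚ) × (ℕ → ℚ)) (r : ℕ) : Prop :=
  1 + htNP p r < p.1 1 / p.2 1

/-- Condition (A2): for `0 ≤ i ≤ r−1`, `A^i(N)` is a special convenient integral datum
and `L̃^{(i)}_1/M̃^{(i)}_1 ∈ ℕ`; for `0 ≤ i ≤ r−2`,
`(1 + M̃^{(i)}_1 + ⋯ + M̃^{(i)}_{r−i−1})·(L̃^{(i)}_{r−i}/M̃^{(i)}_{r−i}) ∈ ℕ`. -/
def CondA2 (p : (ℕ → ℚ) × (ℕ → ℚ)) (r : ℕ) : Prop :=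
  (∀ i, i ≤ r - 1 → IsSCI (abrIterNP p r i) (r - i) ∧
    ∃ a : ℕ, (abrIterNP p r i).1 1 / (abrIterNP p r i).2 1 = a) ∧
  (∀ i, i + 2 ≤ r → ∃ a : ℕ,
    (1 + ∑ k ∈ Finset.Icc 1 (r - i - 1), (abrIterNP p r i).2 k) *
      ((abrIterNP p r i).1 (r - i) / (abrIterNP p r i).2 (r - i)) = a)

/-- Condition (A3): for `0 ≤ i ≤ r−1`,
`gcd(1 + ht(A^i(N)), L̃^{(i)}_1, …, L̃^{(i)}_{r−i}) = 1` (the gcd of the integer-valued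
rationals being taken via their numerators). -/
def CondA3 (p : (ℕ → ℚ) × (ℕ → ℚ)) (r : ℕ) : Prop :=
  ∀ i, i ≤ r - 1 →
    Nat.gcd (1 + htNP (abrIterNP p r i) (r - i)).num.natAbs
      ((Finset.Icc 1 (r - i)).gcd fun k => ((abrIterNP p r i).1 k).num.natAbs) = 1

/-- Positive integers `γ_0 < γ_1 < ⋯ < γ_r` satisfy Bresinsky's conditions if
(1) `gcd(γ_0, …, γ_r) = 1`; (2) `gcd(γ_0, …, γ_i) < gcd(γ_0, …, γ_{i−1})` for all
`1 ≤ i ≤ r`; and (3) `(gcd(γ_0, …, γ_{i−1})/gcd(γ_0, …, γ_i))·γ_i < γ_{i+1}` for all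
`1 ≤ i ≤ r−1`. -/
def IsBresinsky (γ : ℕ → ℕ) (r : ℕ) : Prop :=
  (∀ k, k ≤ r → 0 < γ k) ∧ (∀ k, k < r → γ k < γ (k + 1)) ∧
  (Finset.range (r + 1)).gcd γ = 1 ∧
  (∀ i, 1 ≤ i → i ≤ r →
    (Finset.range (i + 1)).gcd γ < (Finset.range i).gcd γ) ∧
  (∀ i, 1 ≤ i → i + 1 ≤ r →
    ((Finset.range i).gcd γ / (Finset.range (i + 1)).gcd γ) * γ i < γ (i + 1))

/-- Let `β̄_0 < β̄_1 < ⋯ < β̄_g` (`g ≥ 1`) be positive integers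
satisfying Bresinsky's conditions. Then the Merle datum `N` of `(β̄_0, …, β̄_g)`, i.e.
`L_k = (n_k − 1)·β̄_k` and `M_k = n_1⋯n_{k−1}·(n_k − 1)` where `e_k := gcd(β̄_0, …, β̄_k)`
and `n_k := e_{k−1}/e_k`, is a special convenient integral Newton-polygon datum with `g`
edges satisfying conditions (A1)–(A3). -/
theorem merle_datum_satisfies_abrasion_conditions
    (g : ℕ) (hg : 1 ≤ g) (bb : ℕ → ℕ) (hB : IsBresinsky bb g)
    (e : ℕ → ℕ) (he : ∀ k, e k = (Finset.range (k + 1)).gcd bb)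
    (n : ℕ → ℕ) (hn : ∀ k, 1 ≤ k → n k = e (k - 1) / e k)
    (p : (ℕ → ℚ) × (ℕ → ℚ))
    (hpL : ∀ k, 1 ≤ k → k ≤ g → p.1 k = ((n k : ℚ) - 1) * bb k)
    (hpM : ∀ k, 1 ≤ k → k ≤ g →
      p.2 k = ((∏ j ∈ Finset.Icc 1 (k - 1), n j : ℕ) : ℚ) * ((n k : ℚ) - 1)) :
    IsSCI p g ∧ CondA1 p g ∧ CondA2 p g ∧ CondA3 p g := by
  obtain ⟨hbpos, hbmono, hgcd1, hglt, hgdiv⟩ := hB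
  have he0 : e 0 = bb 0 := by rw [he]; simp
  have hepos : ∀ k, 0 < e k := by
    intro k
    rcases Nat.eq_zero_or_pos (e k) with h | h
    · exfalso
      rw [he] at h
      have h0 := (Finset.gcd_eq_zero_iff).mp h 0 (Finset.mem_range.mpr (by omega))
      have := hbpos 0 (Nat.zero_le g); omega
    · exact h
  have hedvdbb : ∀ j k, j ≤ k → e k ∣ bb j := by
    intro j k hjk; rw [he]; exact Finset.gcd_dvd (Finset.mem_range.mpr (by omega))
  have hemono : ∀ j k, j ≤ k → e k ∣ e j := by
    intro j k hjk; rw [he j]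
    refine Finset.dvd_gcd fun i hi => hedvdbb i k ?_
    simp only [Finset.mem_range] at hi; omega
  have heg : e g = 1 := by rw [he]; exact hgcd1
  have helt : ∀ k, 1 ≤ k → k ≤ g → e k < e (k - 1) := by
    intro k h1 h2
    have hk : k - 1 + 1 = k := by omega
    rw [he k, he (k-1), hk]
    exact hglt k h1 h2
  have hne : ∀ k, 1 ≤ k → n k * e k = e (k - 1) := by
    intro k h1
    rw [hn k h1]
    exact Nat.div_mul_cancel (hemono (k-1) k (by omega))
  have hn2 : ∀ k, 1 ≤ k → k ≤ g → 2 ≤ n k := by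
    intro k h1 h2
    have h3 := hne k h1
    have h4 := helt k h1 h2
    have h5 := hepos k
    nlinarith
  have hnpos : ∀ j, 1 ≤ j → j ≤ g → 0 < n j := fun j a b => by have := hn2 j a b; omega
  have hPpos : ∀ k, k ≤ g → 0 < ∏ j ∈ Finset.Icc 1 k, n j := by
    intro k hk
    apply Finset.prod_pos
    intro j hj
    simp only [Finset.mem_Icc] at hj
    exact hnpos j hj.1 (by omega)
  have hprod : ∀ m, m ≤ g → (∏ j ∈ Finset.Icc 1 m, n j) * e m = e 0 := by
    intro m
    induction m with
    | zero => intro _; simp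
    | succ m ih =>
      intro hm
      rw [Finset.prod_Icc_succ_top (by omega), mul_assoc]
      have h1 : n (m+1) * e (m+1) = e m := by
        have := hne (m+1) (by omega); simpa using this
      rw [h1]
      exact ih (by omega)
  have hbstrict : ∀ k, k ≤ g → ∀ j, j < k → bb j < bb k := by
    intro k
    induction k with
    | zero => intro _ j hj; omega
    | succ k ih =>
      intro hk j hj
      have hlast := hbmono k (by omega)
      rcases Nat.lt_or_ge j k with h | h
      · exact lt_trans (ih (by omega) j h) hlast
      · have : j = k := by omega
        subst this; exact hlast
  have hnb : ∀ k, 1 ≤ k → k + 1 ≤ g → n k * bb k < bb (k + 1) := by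
    intro k h1 h2
    have hk : k - 1 + 1 = k := by omega
    rw [hn k h1, he (k-1), he k, hk]
    exact hgdiv k h1 h2
  have heQ : ∀ k, ((e k : ℚ)) ≠ 0 := fun k => by exact_mod_cast (hepos k).ne'
  have heQpos : ∀ k, (0:ℚ) < e k := fun k => by exact_mod_cast hepos k
  have hsum : ∀ m, m ≤ g → (1 + ∑ k ∈ Finset.Icc 1 m, p.2 k)
      = ((∏ j ∈ Finset.Icc 1 m, n j : ℕ) : ℚ) := by
    intro m
    induction m with
    | zero => intro _; simp
    | succ m ih =>
      intro hm
      rw [Finset.sum_Icc_succ_top (by omega), Finset.prod_Icc_succ_top (by omega),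
        hpM (m+1) (by omega) hm, ← add_assoc, ih (by omega)]
      simp only [Nat.add_sub_cancel]
      push_cast
      ring
  have habr : ∀ i, i ≤ g →
      abrIterNP p g i = (fun k => p.1 k / (e (g - i) : ℚ), p.2) := by
    intro i
    induction i with
    | zero =>
      intro _
      have h1 : (e (g - 0) : ℚ) = 1 := by norm_num [heg]
      rw [h1]
      show p = _
      refine Prod.ext ?_ rfl
      funext k
      simp
    | succ i ih =>
      intro hi
      have hm1 : g - i ≤ g := by omega
      have hm2 : g - i - 1 ≤ g := by omega
      show abrNP (abrIterNP p g i) (g - i) = _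
      rw [ih (by omega)]
      unfold abrNP
      refine Prod.ext ?_ rfl
      funext k
      simp only
      rw [hsum (g - i) hm1, hsum (g - i - 1) hm2]
      have haQ : ((∏ j ∈ Finset.Icc 1 (g - i), n j : ℕ) : ℚ) = (e 0 : ℚ) / (e (g-i) : ℚ) := by
        rw [eq_div_iff (heQ _)]
        exact_mod_cast congrArg (Nat.cast : ℕ → ℚ) (hprod (g-i) hm1)
      have hbQ : ((∏ j ∈ Finset.Icc 1 (g - i - 1), n j : ℕ) : ℚ)
          = (e 0 : ℚ) / (e (g-i-1) : ℚ) := by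
        rw [eq_div_iff (heQ _)]
        exact_mod_cast congrArg (Nat.cast : ℕ → ℚ) (hprod (g-i-1) hm2)
      rw [haQ, hbQ, show g - (i+1) = g - i - 1 by omega]
      have ne1 := heQ 0
      have ne2 := heQ (g - i)
      have ne3 := heQ (g - i - 1)
      field_simp
  have hLnat : ∀ m k, m ≤ g → 1 ≤ k → k ≤ m →
      p.1 k / (e m : ℚ) = (((n k - 1) * (bb k / e m) : ℕ) : ℚ) := by
    intro m k hm h1 hk
    have hd : e m ∣ bb k := (hemono k m hk).trans (hedvdbb k k le_rfl)
    have hn1 : 1 ≤ n k := by have := hn2 k h1 (by omega); omega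
    have hmul : ((n k - 1) * (bb k / e m) : ℕ) * (e m) = (n k - 1) * bb k := by
      rw [mul_assoc, Nat.div_mul_cancel hd]
    rw [hpL k h1 (by omega), div_eq_iff (heQ m)]
    rw [← Nat.cast_mul, hmul, Nat.cast_mul, Nat.cast_sub hn1, Nat.cast_one]
  have hincl : ∀ m k, m ≤ g → 1 ≤ k → k ≤ m →
      (p.1 k / (e m : ℚ)) / p.2 k
        = (bb k : ℚ) / ((e m : ℚ) * ((∏ j ∈ Finset.Icc 1 (k-1), n j : ℕ) : ℚ)) := by
    intro m k hm h1 hk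
    have hnk : (2:ℚ) ≤ n k := by exact_mod_cast hn2 k h1 (by omega)
    have hnkne : ((n k : ℚ) - 1) ≠ 0 := by linarith
    have hPne : ((∏ j ∈ Finset.Icc 1 (k-1), n j : ℕ) : ℚ) ≠ 0 := by
      exact_mod_cast (hPpos (k-1) (by omega)).ne'
    rw [hpL k h1 (by omega), hpM k h1 (by omega), div_div,
      div_eq_div_iff (by exact mul_ne_zero (heQ m) (mul_ne_zero hPne hnkne))
        (by exact mul_ne_zero (heQ m) hPne)]
    ring
  have hPsucc : ∀ k, 1 ≤ k →
      (∏ j ∈ Finset.Icc 1 k, n j) = (∏ j ∈ Finset.Icc 1 (k-1), n j) * n k := by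
    intro k h1
    conv_lhs => rw [show k = (k-1)+1 by omega]
    rw [Finset.prod_Icc_succ_top (by omega), show (k-1)+1 = k by omega]
  have hSCI : ∀ m, 1 ≤ m → m ≤ g →
      IsSCI (fun k => p.1 k / (e m : ℚ), p.2) m := by
    intro m h1 hm
    refine ⟨⟨?_, ?_⟩, ?_, ?_⟩
    · intro k hk1 hk2
      constructor
      · show (0:ℚ) < p.1 k / e m
        rw [hpL k hk1 (by omega)]
        have h2 : (2:ℚ) ≤ n k := by exact_mod_cast hn2 k hk1 (by omega)
        have hbk : (0:ℚ) < bb k := by exact_mod_cast hbpos k (by omega)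
        exact div_pos (mul_pos (by linarith) hbk) (heQpos m)
      · show (0:ℚ) < p.2 k
        rw [hpM k hk1 (by omega)]
        have h2 : (2:ℚ) ≤ n k := by exact_mod_cast hn2 k hk1 (by omega)
        have hP : (0:ℚ) < ((∏ j ∈ Finset.Icc 1 (k-1), n j : ℕ) : ℚ) := by
          exact_mod_cast hPpos (k-1) (by omega)
        exact mul_pos hP (by linarith)
    · intro k hk1 hk2
      show (p.1 k / e m) / p.2 k < (p.1 (k+1) / e m) / p.2 (k+1)
      rw [hincl m k hm hk1 (by omega), hincl m (k+1) hm (by omega) hk2]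
      simp only [Nat.add_sub_cancel]
      have hP1 : (0:ℚ) < ((∏ j ∈ Finset.Icc 1 (k-1), n j : ℕ) : ℚ) := by
        exact_mod_cast hPpos (k-1) (by omega)
      have hP2 : (0:ℚ) < ((∏ j ∈ Finset.Icc 1 k, n j : ℕ) : ℚ) := by
        exact_mod_cast hPpos k (by omega)
      rw [div_lt_div_iff₀ (mul_pos (heQpos m) hP1) (mul_pos (heQpos m) hP2)]
      have hkey : bb k * (e m * (∏ j ∈ Finset.Icc 1 k, n j))
          < bb (k+1) * (e m * (∏ j ∈ Finset.Icc 1 (k-1), n j)) := by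
        rw [hPsucc k hk1]
        calc bb k * (e m * ((∏ j ∈ Finset.Icc 1 (k-1), n j) * n k))
            = (n k * bb k) * (e m * (∏ j ∈ Finset.Icc 1 (k-1), n j)) := by ring
          _ < bb (k+1) * (e m * (∏ j ∈ Finset.Icc 1 (k-1), n j)) :=
              mul_lt_mul_of_pos_right (hnb k hk1 (by omega))
                (Nat.mul_pos (hepos m) (hPpos (k-1) (by omega)))
      exact_mod_cast hkey
    · intro k hk1 hk2
      constructor
      · refine ⟨(n k - 1) * (bb k / e m), ?_, hLnat m k hm hk1 hk2⟩
        have h2 := hn2 k hk1 (by omega)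
        have hd : e m ∣ bb k := (hemono k m hk2).trans (hedvdbb k k le_rfl)
        have h3 := Nat.div_pos (Nat.le_of_dvd (hbpos k (by omega)) hd) (hepos m)
        exact Nat.mul_pos (by omega) h3
      · refine ⟨(∏ j ∈ Finset.Icc 1 (k-1), n j) * (n k - 1), ?_, ?_⟩
        · have h2 := hn2 k hk1 (by omega)
          exact Nat.mul_pos (hPpos (k-1) (by omega)) (by omega)
        · rw [hpM k hk1 (by omega)]
          have hn1 : 1 ≤ n k := by have := hn2 k hk1 (by omega); omega
          rw [Nat.cast_mul, Nat.cast_sub hn1, Nat.cast_one]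
    · intro k hk1 hk2
      show 1 < (p.1 k / e m) / p.2 k
      rw [hincl m k hm hk1 hk2]
      have hP : (0:ℚ) < ((∏ j ∈ Finset.Icc 1 (k-1), n j : ℕ) : ℚ) := by
        exact_mod_cast hPpos (k-1) (by omega)
      have hpos : (0:ℚ) < (e m : ℚ) * ((∏ j ∈ Finset.Icc 1 (k-1), n j : ℕ) : ℚ) :=
        mul_pos (heQpos m) hP
      rw [lt_div_iff₀ hpos, one_mul]
      have hkey : e m * (∏ j ∈ Finset.Icc 1 (k-1), n j) < bb k := by
        calc e m * (∏ j ∈ Finset.Icc 1 (k-1), n j)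
            ≤ e (k-1) * (∏ j ∈ Finset.Icc 1 (k-1), n j) :=
              Nat.mul_le_mul_right _
                (Nat.le_of_dvd (hepos (k-1)) (hemono (k-1) m (by omega)))
          _ = e 0 := by rw [mul_comm]; exact hprod (k-1) (by omega)
          _ = bb 0 := he0
          _ < bb k := hbstrict k (by omega) 0 hk1
      exact_mod_cast hkey
  -- A3 core nat lemma
  have hA3nat : ∀ m, 1 ≤ m → m ≤ g →
      Nat.gcd (∏ j ∈ Finset.Icc 1 m, n j)
        ((Finset.Icc 1 m).gcd fun k => (n k - 1) * (bb k / e m)) = 1 := by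
    intro m h1 hm
    set Pm := ∏ j ∈ Finset.Icc 1 m, n j with hPm
    set G := (Finset.Icc 1 m).gcd fun k => (n k - 1) * (bb k / e m) with hG
    set d := Nat.gcd Pm G with hd
    have hstep : ∀ k, k ≤ m → d * e m ∣ bb k := by
      intro k
      induction k using Nat.strong_induction_on with
      | _ k ih =>
        intro hk
        rcases Nat.eq_zero_or_pos k with rfl | hk1
        · have h2 : d * e m ∣ Pm * e m := mul_dvd_mul_right (Nat.gcd_dvd_left _ _) _
          rw [hPm, hprod m hm, he0] at h2
          exact h2
        · have hdk : e m ∣ bb k := (hemono k m hk).trans (hedvdbb k k le_rfl)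
          have hdG : d ∣ (n k - 1) * (bb k / e m) :=
            (Nat.gcd_dvd_right _ _).trans
              (Finset.gcd_dvd (by simp only [Finset.mem_Icc]; omega))
          have hdvd1 : d * e m ∣ (n k - 1) * bb k := by
            have h3 := mul_dvd_mul_right hdG (e m)
            rwa [mul_assoc, Nat.div_mul_cancel hdk] at h3
          have hek : d * e m ∣ e (k - 1) := by
            rw [he (k-1), show k - 1 + 1 = k by omega]
            refine Finset.dvd_gcd fun j hj => ?_
            simp only [Finset.mem_range] at hj
            exact ih j (by omega) (by omega)
          have h2 : e (k-1) ∣ n k * bb k := by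
            have heq : n k * bb k = e (k-1) * (bb k / e k) := by
              rw [← hne k hk1]
              conv_lhs => rw [← Nat.div_mul_cancel (hedvdbb k k le_rfl)]
              ring
            rw [heq]
            exact dvd_mul_right _ _
          have h3 : d * e m ∣ n k * bb k := hek.trans h2
          have h4 : n k * bb k - (n k - 1) * bb k = bb k := by
            rw [← Nat.sub_mul, show n k - (n k - 1) = 1 by
              have := hn2 k hk1 (by omega); omega, one_mul]
          have h5 := Nat.dvd_sub h3 hdvd1
          rwa [h4] at h5
    have hfin : d * e m ∣ e m := by
      have h6 : d * e m ∣ (Finset.range (m+1)).gcd bb := by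
        refine Finset.dvd_gcd fun j hj => ?_
        simp only [Finset.mem_range] at hj
        exact hstep j (by omega)
      rwa [← he m] at h6
    obtain ⟨c, hc⟩ := hfin
    have hone : d ∣ 1 := by
      refine ⟨c, ?_⟩
      have hem := hepos m
      have : e m * 1 = e m * (d * c) := by rw [mul_one]; nth_rewrite 1 [hc]; ring
      exact Nat.eq_of_mul_eq_mul_left hem this
    exact Nat.dvd_one.mp hone
  -- assemble
  have hA1 : CondA1 p g := by
    unfold CondA1 htNP
    rw [hsum g le_rfl, hpL 1 le_rfl hg, hpM 1 le_rfl hg]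
    have h2 : (2:ℚ) ≤ n 1 := by exact_mod_cast hn2 1 le_rfl hg
    have hne1 : ((n 1 : ℚ) - 1) ≠ 0 := by linarith
    have hI : Finset.Icc 1 (1-1:ℕ) = ∅ := by simp
    rw [hI]
    simp only [Finset.prod_empty, Nat.cast_one, one_mul]
    rw [mul_comm ((n 1:ℚ) - 1) _, mul_div_assoc, div_self hne1, mul_one]
    have hPg : (∏ j ∈ Finset.Icc 1 g, n j) = bb 0 := by
      have h3 := hprod g le_rfl
      rw [heg, mul_one] at h3
      rw [h3, he0]
    rw [hPg]
    exact_mod_cast hbstrict 1 hg 0 (by omega)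
  have hA2 : CondA2 p g := by
    constructor
    · intro i hi
      have hm1 : 1 ≤ g - i := by omega
      rw [habr i (by omega)]
      refine ⟨hSCI (g-i) hm1 (by omega), ⟨bb 1 / e (g-i), ?_⟩⟩
      show (p.1 1 / e (g-i)) / p.2 1 = _
      rw [hincl (g-i) 1 (by omega) le_rfl hm1]
      have hI : Finset.Icc 1 (1-1:ℕ) = ∅ := by simp
      rw [hI]
      simp only [Finset.prod_empty, Nat.cast_one, mul_one]
      have hdv : e (g-i) ∣ bb 1 := (hemono 1 (g-i) hm1).trans (hedvdbb 1 1 le_rfl)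
      rw [Nat.cast_div hdv (heQ _)]
    · intro i hi
      have hm2 : 2 ≤ g - i := by omega
      rw [habr i (by omega)]
      refine ⟨bb (g-i) / e (g-i), ?_⟩
      show (1 + ∑ k ∈ Finset.Icc 1 (g-i-1), p.2 k) * ((p.1 (g-i) / e (g-i)) / p.2 (g-i)) = _
      rw [hsum (g-i-1) (by omega), hincl (g-i) (g-i) (by omega) (by omega) le_rfl]
      have hdv : e (g-i) ∣ bb (g-i) :=
        (hemono (g-i) (g-i) le_rfl).trans (hedvdbb (g-i) (g-i) le_rfl)
      rw [Nat.cast_div hdv (heQ _)]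
      have hPne : ((∏ j ∈ Finset.Icc 1 (g-i-1), n j : ℕ) : ℚ) ≠ 0 := by
        exact_mod_cast (hPpos (g-i-1) (by omega)).ne'
      have haux : ∀ (a b c : ℚ), b ≠ 0 → c ≠ 0 → c * (a / (b * c)) = a / b := by
        intro a b c hb hc
        field_simp
      exact haux _ _ _ (heQ _) hPne
  have hA3 : CondA3 p g := by
    intro i hi
    have hm1 : 1 ≤ g - i := by omega
    rw [habr i (by omega)]
    have hht : (1 + htNP (fun k => p.1 k / (e (g-i):ℚ), p.2) (g - i))
        = ((∏ j ∈ Finset.Icc 1 (g-i), n j : ℕ) : ℚ) := by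
      unfold htNP
      exact hsum (g-i) (by omega)
    rw [hht]
    have hnum : ((((∏ j ∈ Finset.Icc 1 (g-i), n j : ℕ) : ℚ)).num.natAbs)
        = ∏ j ∈ Finset.Icc 1 (g-i), n j := by
      simp only [Rat.num_natCast, Int.natAbs_natCast]
    rw [hnum]
    have hgcdeq : ((Finset.Icc 1 (g-i)).gcd fun k =>
          (((fun k => p.1 k / (e (g-i):ℚ), p.2) : (ℕ → ℚ) × (ℕ → ℚ)).1 k).num.natAbs)
        = (Finset.Icc 1 (g-i)).gcd fun k => (n k - 1) * (bb k / e (g-i)) := by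
      refine Finset.gcd_congr rfl fun k hk => ?_
      simp only [Finset.mem_Icc] at hk
      show ((p.1 k / (e (g-i):ℚ)).num.natAbs) = _
      rw [hLnat (g-i) k (by omega) hk.1 hk.2]
      simp only [Rat.num_natCast, Int.natAbs_natCast]
    rw [hgcdeq]
    exact hA3nat (g-i) hm1 (by omega)
  refine ⟨?_, hA1, hA2, hA3⟩
  have hp : p = (fun k => p.1 k / (e (g - 0) : ℚ), p.2) := habr 0 (by omega)
  rw [hp]
  exact hSCI g hg le_rfl
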